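/- arXiv:1105.0857 — 2 statements merged into one kernel-verified Lean document; each statement's English description precedes it below -/
import Mathlib

section
/- Let Z_1,...,Z_n be independent, symmetric (about 0) real random variables. Then for all t > 0, Pr[ (∑ Z_i)^2 / (∑ Z_i^2) > t ] ≤ 2·exp(−t/2), where the event is interpreted on the set where ∑ Z_i^2 > 0. -/
/-!
By independence and symmetry the joint law of `(Z i)` is invariant under every sign flip
`(y i) ↦ (± y i)`, so the probability of the event equals its average over the `2 ^ n` sign
patterns. For a fixed vector `x`, at most a fraction `2 exp (-t / 2)` of the sign patterns `ε`
satisfy `t ∑ x i ^ 2 < (∑ ε i x i) ^ 2`: this is Hoeffding's bound for Rademacher sums, i.e.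
`cosh u ≤ exp (u ^ 2 / 2)` followed by a Chernoff bound with `λ = √(t / ∑ x i ^ 2)`.
-/

open MeasureTheory ProbabilityTheory Finset Real

lemma exp_abs_le_exp_add_exp_neg (a : ℝ) : exp |a| ≤ exp a + exp (-a) := by
  rcases abs_cases a with ⟨h, -⟩ | ⟨h, -⟩ <;> rw [h] <;> linarith [exp_pos a, exp_pos (-a)]

lemma exp_le_exp_add_exp_of_mul_lt_sq {t V S l : ℝ} (ht : 0 ≤ t) (hl : l ^ 2 * V = t)
    (h : t * V < S ^ 2) : exp t ≤ exp (l * S) + exp (-l * S) := by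
  have : t ≤ |l * S| := by
    refine abs_of_nonneg ht ▸ sq_le_sq.1 ?_
    nlinarith [sq_nonneg l]
  grw [this, neg_mul, exp_abs_le_exp_add_exp_neg]

lemma measureReal_le_of_forall_card_le {α K : Type*} [MeasurableSpace α] [Fintype K] [Nonempty K]
    {ν : Measure α} [IsProbabilityMeasure ν] {g : K → α → α}
    (hg : ∀ k, MeasurePreserving (g k) ν ν) {E : Set α} [DecidablePred (· ∈ E)]
    (hE : MeasurableSet E) {c : ℝ} (hc : ∀ x, (#{k | g k x ∈ E} : ℝ) ≤ Fintype.card K * c) :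
    ν.real E ≤ c := by
  have hmeas : ∀ k, MeasurableSet (g k ⁻¹' E) := fun k => (hg k).measurable hE
  have hint : ∀ k, Integrable ((g k ⁻¹' E).indicator (1 : α → ℝ)) ν :=
    fun k => (integrable_const 1).indicator (hmeas k)
  have hcount : ∀ x, ∑ k, (g k ⁻¹' E).indicator (1 : α → ℝ) x = (#{k | g k x ∈ E} : ℝ) :=
    fun x => by
      classical
      simp only [Set.indicator_apply, Set.mem_preimage, Pi.one_apply, sum_boole]
  refine le_of_mul_le_mul_left ?_ (Nat.cast_pos.2 Fintype.card_pos : (0 : ℝ) < Fintype.card K)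
  calc Fintype.card K * ν.real E = ∑ k, ν.real (g k ⁻¹' E) := by
        simp [(hg _).measureReal_preimage hE.nullMeasurableSet]
    _ = ∫ x, ∑ k, (g k ⁻¹' E).indicator 1 x ∂ν := by
        simp_rw [← integral_indicator_one (hmeas _), ← integral_finsetSum _ fun k _ => hint k]
    _ ≤ ∫ _, Fintype.card K * c ∂ν :=
        integral_mono (integrable_finsetSum _ fun k _ => hint k) (integrable_const _) fun x => by
          rw [hcount]; exact hc x
    _ = Fintype.card K * c := by simp

section SignFlip

variable {ι : Type*}

def signFlip (ε : ι → Bool) (x : ι → ℝ) : ι → ℝ := fun i => if ε i then x i else -x i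

lemma measurable_signFlip (ε : ι → Bool) : Measurable (signFlip ε) :=
  measurable_pi_lambda _ fun i => by
    unfold signFlip
    cases ε i
    · exact (measurable_pi_apply i).neg
    · exact measurable_pi_apply i

@[simp]
lemma signFlip_sq (ε : ι → Bool) (x : ι → ℝ) (i : ι) : signFlip ε x i ^ 2 = x i ^ 2 := by
  unfold signFlip; split_ifs <;> simp

variable [Fintype ι]

lemma measurePreserving_signFlip_pi (ν : ι → Measure ℝ) [∀ i, SigmaFinite (ν i)]
    (hν : ∀ i, (ν i).map Neg.neg = ν i) (ε : ι → Bool) :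
    MeasurePreserving (signFlip ε) (Measure.pi ν) (Measure.pi ν) := by
  set f : ι → ℝ → ℝ := fun i y => if ε i then y else -y
  have hf : ∀ i, (ν i).map (f i) = ν i := fun i => by
    by_cases h : ε i
    · simp [f, h]
    · simpa [f, h] using hν i
  have : ∀ i, SigmaFinite ((ν i).map (f i)) := fun i => by rw [hf i]; infer_instance
  refine ⟨measurable_signFlip ε, ?_⟩
  change (Measure.pi ν).map (fun x i => f i (x i)) = _
  rw [Measure.pi_map_pi fun i => ?_]
  · simp_rw [hf]
  · by_cases h : ε i <;> simp [f, h] <;> fun_prop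

lemma sum_sq_pos_of_mul_sum_sq_lt (x : ι → ℝ) {t : ℝ} (h : t * ∑ i, x i ^ 2 < (∑ i, x i) ^ 2) :
    0 < ∑ i, x i ^ 2 := by
  refine (sum_nonneg fun i _ => sq_nonneg (x i)).lt_of_ne fun hV => ?_
  have := sq_sum_le_card_mul_sum_sq (s := univ) (f := x)
  rw [← hV] at h this
  linarith

lemma lt_div_sum_sq_iff (x : ι → ℝ) (t : ℝ) :
    (0 < ∑ i, x i ^ 2 ∧ t < (∑ i, x i) ^ 2 / ∑ i, x i ^ 2) ↔ t * ∑ i, x i ^ 2 < (∑ i, x i) ^ 2 :=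
  ⟨fun ⟨hV, h⟩ => (lt_div_iff₀ hV).1 h, fun h =>
    have hV := sum_sq_pos_of_mul_sum_sq_lt x h
    ⟨hV, (lt_div_iff₀ hV).2 h⟩⟩

variable [DecidableEq ι]

lemma sum_exp_mul_sum_signFlip_le (x : ι → ℝ) (l : ℝ) :
    ∑ ε : ι → Bool, exp (l * ∑ i, signFlip ε x i)
      ≤ 2 ^ Fintype.card ι * exp (l ^ 2 * (∑ i, x i ^ 2) / 2) := by
  calc ∑ ε : ι → Bool, exp (l * ∑ i, signFlip ε x i)
      = ∏ i, 2 * cosh (l * x i) := by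
        simp_rw [signFlip, mul_sum, exp_sum]
        rw [← Fintype.prod_sum (fun i (b : Bool) => exp (l * if b then x i else -x i))]
        simp [cosh_eq, mul_div_cancel₀]
    _ ≤ ∏ i, 2 * exp ((l * x i) ^ 2 / 2) :=
        prod_le_prod (fun i _ => by positivity) fun i _ => by grw [cosh_le_exp_half_sq]
    _ = 2 ^ Fintype.card ι * exp (l ^ 2 * (∑ i, x i ^ 2) / 2) := by
        rw [prod_mul_distrib, prod_const, card_univ, ← exp_sum, mul_sum, sum_div]
        simp_rw [mul_pow]

lemma card_mul_sum_sq_lt_sq_sum_signFlip_le (x : ι → ℝ) (t : ℝ) :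
    (#{ε : ι → Bool | t * ∑ i, x i ^ 2 < (∑ i, signFlip ε x i) ^ 2} : ℝ)
      ≤ 2 ^ Fintype.card ι * (2 * exp (-t / 2)) := by
  set V := ∑ i, x i ^ 2
  set S := fun ε : ι → Bool => ∑ i, signFlip ε x i
  set A := ({ε | t * V < S ε ^ 2} : Finset (ι → Bool))
  obtain ht | ht := le_or_gt t 0
  · calc (#A : ℝ) ≤ 2 ^ Fintype.card ι * 1 := by
          rw [mul_one]; exact_mod_cast (card_filter_le _ _).trans (by simp)
      _ ≤ 2 ^ Fintype.card ι * (2 * exp (-t / 2)) := by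
          gcongr; linarith [one_le_exp (by linarith : 0 ≤ -t / 2)]
  obtain hV | hV := (sum_nonneg fun i _ => sq_nonneg (x i) : 0 ≤ V).eq_or_lt
  · have hA : A = ∅ := filter_eq_empty_iff.2 fun ε _ h => by
      have := sum_sq_pos_of_mul_sum_sq_lt (signFlip ε x) (by simpa [V] using h)
      simp only [signFlip_sq] at this
      exact this.ne hV
    rw [hA, card_empty, Nat.cast_zero]
    positivity
  set l := √(t / V)
  have hlV : l ^ 2 * V = t := by rw [sq_sqrt (div_nonneg ht.le hV.le), div_mul_cancel₀ _ hV.ne']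
  have hexp : ∀ ε ∈ A, exp t ≤ exp (l * S ε) + exp (-l * S ε) :=
    fun ε hε => exp_le_exp_add_exp_of_mul_lt_sq ht.le hlV (mem_filter.1 hε).2
  calc (#A : ℝ) = exp (-t) * (#A • exp t) := by
        rw [nsmul_eq_mul, mul_left_comm, ← exp_add, neg_add_cancel, exp_zero, mul_one]
    _ ≤ exp (-t) * ∑ ε ∈ A, (exp (l * S ε) + exp (-l * S ε)) := by
        gcongr; exact card_nsmul_le_sum _ _ _ hexp
    _ ≤ exp (-t) * ∑ ε, (exp (l * S ε) + exp (-l * S ε)) := by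
        gcongr; exact subset_univ A
    _ ≤ exp (-t) * (2 ^ Fintype.card ι * exp (l ^ 2 * V / 2)
          + 2 ^ Fintype.card ι * exp ((-l) ^ 2 * V / 2)) := by
        rw [sum_add_distrib]
        gcongr
        · exact sum_exp_mul_sum_signFlip_le x l
        · exact sum_exp_mul_sum_signFlip_le x (-l)
    _ = 2 ^ Fintype.card ι * (2 * exp (-t / 2)) := by
        rw [neg_sq, hlV, show -t / 2 = -t + t / 2 by ring, exp_add]
        ring

end SignFlip

theorem stmt_0_general {Ω : Type*} [MeasurableSpace Ω] (μ : Measure Ω) [IsProbabilityMeasure μ]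
    (n : ℕ) (Z : Fin n → Ω → ℝ)
    (hmeas : ∀ i, Measurable (Z i))
    (hindep : iIndepFun Z μ)
    (hsym : ∀ i, Measure.map (Z i) μ = Measure.map (fun ω => -(Z i ω)) μ)
    (t : ℝ) :
    (μ {ω | 0 < ∑ i, (Z i ω) ^ 2 ∧
        t < (∑ i, Z i ω) ^ 2 / ∑ i, (Z i ω) ^ 2}).toReal ≤ 2 * Real.exp (-t / 2) := by
  have : ∀ i, IsProbabilityMeasure (μ.map (Z i)) :=
    fun i => Measure.isProbabilityMeasure_map (hmeas i).aemeasurable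
  have hZsym : ∀ i, (μ.map (Z i)).map Neg.neg = μ.map (Z i) := fun i => by
    rw [Measure.map_map measurable_neg (hmeas i), hsym i]; rfl
  let E : Set (Fin n → ℝ) := {y | t * ∑ i, y i ^ 2 < (∑ i, y i) ^ 2}
  have hE : MeasurableSet E := measurableSet_lt (by fun_prop) (by fun_prop)
  simp_rw [lt_div_sum_sq_iff fun i => Z _ _]
  change μ.real ((fun ω i => Z i ω) ⁻¹' E) ≤ _
  rw [← map_measureReal_apply (measurable_pi_lambda _ hmeas) hE,
    hindep.map_fun_eq_pi_map fun i => (hmeas i).aemeasurable]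
  refine measureReal_le_of_forall_card_le (measurePreserving_signFlip_pi _ hZsym) hE fun x => ?_
  simpa [E] using card_mul_sum_sq_lt_sq_sum_signFlip_le x t

/-- self-normalized tail bound for independent symmetric random variables. -/
theorem stmt_0 {Ω : Type*} [MeasurableSpace Ω] (μ : Measure Ω) [IsProbabilityMeasure μ]
    (n : ℕ) (Z : Fin n → Ω → ℝ)
    (hmeas : ∀ i, Measurable (Z i))
    (hindep : iIndepFun Z μ)
    (hsym : ∀ i, Measure.map (Z i) μ = Measure.map (fun ω => -(Z i ω)) μ)
    (t : ℝ) (ht : 0 < t) :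
    (μ {ω | 0 < ∑ i, (Z i ω) ^ 2 ∧
        t < (∑ i, Z i ω) ^ 2 / ∑ i, (Z i ω) ^ 2}).toReal ≤ 2 * Real.exp (-t / 2) :=
  stmt_0_general μ n Z hmeas hindep hsym t
end

section
/- Let D be a random variable (the domain), and suppose the random vector V = E[XY | D] − E[XY] ∈ ℝ^p is symmetric (V and −V identically distributed). For n ≥ 2 i.i.d. domains d_1,...,d_n, coordinate i, μ̂_i = (1/n)∑_k E[X_iY|d_k], σ̂_i² = (1/(n−1))∑_k (E[X_iY|d_k] − μ̂_i)², and δ ∈ (0,1) with p ≤ (δ/2)e^{n/8}: with probability ≥ 1 − δ, for all i ≤ p, |μ̂_i − E[X_iY]| ≤ (σ̂_i/√n)·√(4 log(2p/δ)). -/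
open MeasureTheory ProbabilityTheory Finset Real
open scoped ENNReal

/-!
Fix a coordinate `i`, let `g k = C k · i - m i`, `S = ∑ k, g k` and `Q = ∑ k, g k ^ 2`. Algebra shows
that the T-statistic bound holds as soon as `S ^ 2 ≤ (a / 2) Q` with `a = 4 log (2p/δ)`, because the
size condition forces `a ≤ n + 1`. The `g k` are independent and symmetric, so multiplying them by
any sign vector `ε ∈ {±1}ⁿ` leaves their joint law unchanged; hence `P(S ^ 2 > c Q)` is the
average over `ε` of `P((∑ ε k g k) ^ 2 > c Q)`, and for each fixed outcome the proportion of such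
`ε` is a Rademacher tail, at most `2 exp (-c / 2)` by Chernoff's bound. For `c = a / 2` this is
`δ / p`, and a union bound over the `p` coordinates concludes.
-/

lemma sum_sub_mean_sq {n : ℕ} (z : Fin n → ℝ) :
    ∑ k, (z k - (∑ j, z j) / n) ^ 2 = ∑ k, z k ^ 2 - (∑ k, z k) ^ 2 / n := by
  simp only [sub_sq, sum_add_distrib, sum_sub_distrib, ← sum_mul, ← mul_sum, sum_const,
    card_univ, Fintype.card_fin, nsmul_eq_mul]
  rcases eq_or_ne n 0 with rfl | hn
  · simp
  · field_simp
    ring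

lemma abs_mean_sub_le_of_sq_sum_le {n : ℕ} (hn : 2 ≤ n) (y : Fin n → ℝ) (m : ℝ) {a : ℝ}
    (ha0 : 0 ≤ a) (ha : a ≤ n + 1) (h : (∑ k, (y k - m)) ^ 2 ≤ a / 2 * ∑ k, (y k - m) ^ 2) :
    |1 / (n : ℝ) * ∑ k, y k - m| ≤
      sqrt (1 / ((n : ℝ) - 1) * ∑ k, (y k - 1 / (n : ℝ) * ∑ j, y j) ^ 2) / sqrt n * sqrt a := by
  have hn' : (2 : ℝ) ≤ n := by exact_mod_cast hn
  set S := ∑ k, (y k - m)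
  set Q := ∑ k, (y k - m) ^ 2
  have hmean : 1 / (n : ℝ) * ∑ k, y k - m = S / n := by
    simp only [S, sum_sub_distrib, sum_const, card_univ, Fintype.card_fin, nsmul_eq_mul]
    field_simp
  have hvar : ∑ k, (y k - 1 / (n : ℝ) * ∑ j, y j) ^ 2 = Q - S ^ 2 / n := by
    rw [← sum_sub_mean_sq]
    exact sum_congr rfl fun k _ => by congr 1; linear_combination -hmean
  have key : S ^ 2 * (n - 1) ≤ a * (n * Q - S ^ 2) := by
    have hQ : 0 ≤ Q := sum_nonneg fun k _ => sq_nonneg _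
    nlinarith [mul_le_mul_of_nonneg_right h (by linarith : (0:ℝ) ≤ n - 1 + a),
      mul_nonneg (mul_nonneg ha0 hQ) (by linarith : (0:ℝ) ≤ n + 1 - a)]
  rw [hmean, hvar, ← sqrt_div' _ (by positivity : (0:ℝ) ≤ n), ← sqrt_mul' _ ha0]
  apply abs_le_sqrt
  rw [show 1 / ((n : ℝ) - 1) * (Q - S ^ 2 / n) / n * a = a * (n * Q - S ^ 2) / (n - 1) / n ^ 2 by
    field_simp, div_pow, div_le_div_iff_of_pos_right (by positivity), le_div_iff₀ (by linarith)]
  linarith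

-- Chernoff's indicator bound with the parameter `√(c / Q)` that optimizes the tail below.
lemma one_le_exp_neg_mul_add_exp {c Q t : ℝ} (hc : 0 < c) (hQ : 0 < Q) (h : c * Q < t ^ 2) :
    1 ≤ exp (-c) * (exp (sqrt (c / Q) * t) + exp (-(sqrt (c / Q) * t))) := by
  have hct : c < |sqrt (c / Q) * t| := by
    refine lt_of_pow_lt_pow_left₀ 2 (abs_nonneg _) ?_
    rw [sq_abs, mul_pow, sq_sqrt (by positivity)]
    calc c ^ 2 = c / Q * (c * Q) := by
          rw [mul_comm c Q, ← mul_assoc, div_mul_cancel₀ c hQ.ne', sq]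
      _ < c / Q * t ^ 2 := by gcongr
  calc (1 : ℝ) ≤ exp (-c) * exp |sqrt (c / Q) * t| := by
        rw [← exp_add, one_le_exp_iff]; linarith
    _ ≤ _ := by gcongr; exact exp_abs_le _

section SignFlips

variable {ι : Type*} [Fintype ι] [DecidableEq ι]

lemma sum_exp_sum_units_smul_le (y : ι → ℝ) :
    ∑ ε : ι → ℤˣ, exp (∑ k, ε k • y k) ≤ 2 ^ Fintype.card ι * exp (∑ k, y k ^ 2 / 2) := by
  calc ∑ ε : ι → ℤˣ, exp (∑ k, ε k • y k)
      = ∏ k, ∑ u : ℤˣ, exp (u • y k) := by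
        simp only [exp_sum, Fintype.prod_sum]
    _ = ∏ k, 2 * cosh (y k) := by
        simp [cosh_eq, Units.smul_def, mul_div_cancel₀]
    _ ≤ ∏ k, 2 * exp (y k ^ 2 / 2) := by
        gcongr with k
        exact cosh_le_exp_half_sq _
    _ = 2 ^ Fintype.card ι * exp (∑ k, y k ^ 2 / 2) := by
        rw [prod_mul_distrib, prod_const, exp_sum, card_univ]

lemma card_sq_sum_units_smul_gt_le (x : ι → ℝ) {c : ℝ} (hc : 0 < c) :
    (#{ε : ι → ℤˣ | c * ∑ k, x k ^ 2 < (∑ k, ε k • x k) ^ 2} : ℝ)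
      ≤ 2 * 2 ^ Fintype.card ι * exp (-c / 2) := by
  set Q := ∑ k, x k ^ 2 with hQ_def
  obtain hQ | hQ := (sum_nonneg fun k _ => sq_nonneg (x k) : 0 ≤ Q).eq_or_lt
  · have hx : x = 0 := funext fun k => by
      simpa using (sum_eq_zero_iff_of_nonneg fun k _ => sq_nonneg (x k)).1 hQ.symm k
    refine (le_of_eq ?_).trans (by positivity : (0 : ℝ) ≤ 2 * 2 ^ Fintype.card ι * exp (-c / 2))
    simp [hx, Q]
  set l := sqrt (c / Q)
  have hlQ : ∑ k, (l * x k) ^ 2 / 2 = c / 2 := by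
    simp only [mul_pow, ← sum_div, ← mul_sum, ← hQ_def, l]
    rw [sq_sqrt (by positivity), div_mul_cancel₀ _ hQ.ne']
  have hexp_le : ∀ ε ∈ ({ε : ι → ℤˣ | c * Q < (∑ k, ε k • x k) ^ 2} : Finset _),
      1 ≤ exp (-c) * (exp (∑ k, ε k • (l * x k)) + exp (∑ k, ε k • -(l * x k))) := by
    intro ε hε
    have hsum : ∀ s : ℝ, ∑ k, ε k • (s * x k) = s * ∑ k, ε k • x k := fun s => by
      simp_rw [mul_sum, mul_smul_comm]
    simp_rw [smul_neg, sum_neg_distrib, hsum]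
    exact one_le_exp_neg_mul_add_exp hc hQ (mem_filter.1 hε).2
  calc (#{ε : ι → ℤˣ | c * Q < (∑ k, ε k • x k) ^ 2} : ℝ)
      ≤ ∑ ε : ι → ℤˣ, exp (-c) * (exp (∑ k, ε k • (l * x k)) + exp (∑ k, ε k • -(l * x k))) := by
        rw [card_eq_sum_ones, Nat.cast_sum, Nat.cast_one]
        exact (sum_le_sum hexp_le).trans (sum_le_sum_of_subset_of_nonneg (filter_subset _ _)
          fun _ _ _ => by positivity)
    _ ≤ exp (-c) * (2 ^ Fintype.card ι * exp (c / 2) + 2 ^ Fintype.card ι * exp (c / 2)) := by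
        rw [← mul_sum, sum_add_distrib]
        gcongr
        · exact (sum_exp_sum_units_smul_le _).trans_eq (by rw [hlQ])
        · exact (sum_exp_sum_units_smul_le _).trans_eq (by simp_rw [neg_sq, hlQ])
    _ = 2 * 2 ^ Fintype.card ι * exp (-c / 2) := by
        rw [show -c / 2 = -c + c / 2 by ring, exp_add]; ring

end SignFlips

section Symmetrization

variable {ι Ω : Type*} [Fintype ι] [MeasurableSpace Ω] {μ : Measure Ω} {g : ι → Ω → ℝ}

lemma map_units_smul_eq_of_symm (hg : ∀ k, Measurable (g k)) (hind : iIndepFun g μ)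
    (hsym : ∀ k, μ.map (-g k) = μ.map (g k)) (ε : ι → ℤˣ) :
    μ.map (fun ω k => ε k • g k ω) = μ.map (fun ω k => g k ω) := by
  have hind' : iIndepFun (fun k ω => ε k • g k ω) μ :=
    hind.comp (fun k (x : ℝ) => ε k • x) fun k => measurable_const_smul _
  refine (hind'.map_fun_eq_pi_map fun k => ((hg k).const_smul _).aemeasurable).trans
    (.trans ?_ (hind.map_fun_eq_pi_map fun k => (hg k).aemeasurable).symm)
  congr 1 with k : 1
  rcases Int.units_eq_one_or (ε k) with h | h <;> simp [h, hsym k]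

variable [DecidableEq ι] [IsProbabilityMeasure μ]

open scoped Classical in
lemma card_mul_measure_le_of_card_units_smul_mem_le (hg : ∀ k, Measurable (g k))
    (hind : iIndepFun g μ) (hsym : ∀ k, μ.map (-g k) = μ.map (g k))
    {B : Set (ι → ℝ)} (hB : MeasurableSet B) {K : ℝ≥0∞}
    (hK : ∀ x : ι → ℝ, (#{ε : ι → ℤˣ | (fun k => ε k • x k) ∈ B} : ℝ≥0∞) ≤ K) :
    2 ^ Fintype.card ι * μ {ω | (fun k => g k ω) ∈ B} ≤ K := by
  have hmeas : ∀ ε : ι → ℤˣ, Measurable fun ω k => ε k • g k ω :=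
    fun ε => measurable_pi_lambda _ fun k => (hg k).const_smul _
  have hflip : ∀ ε : ι → ℤˣ,
      μ {ω | (fun k => ε k • g k ω) ∈ B} = μ {ω | (fun k => g k ω) ∈ B} := fun ε => by
    have := congrArg (· B) (map_units_smul_eq_of_symm hg hind hsym ε)
    rwa [Measure.map_apply (hmeas ε) hB, Measure.map_apply (measurable_pi_lambda _ hg) hB] at this
  calc 2 ^ Fintype.card ι * μ {ω | (fun k => g k ω) ∈ B}
      = ∑ ε : ι → ℤˣ, μ {ω | (fun k => ε k • g k ω) ∈ B} := by
        simp [hflip, Fintype.card_pi]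
    _ = ∑ ε : ι → ℤˣ, ∫⁻ ω, {ω | (fun k => ε k • g k ω) ∈ B}.indicator 1 ω ∂μ :=
        sum_congr rfl fun ε _ => (lintegral_indicator_one (hmeas ε hB)).symm
    _ = ∫⁻ ω, ∑ ε : ι → ℤˣ, {ω | (fun k => ε k • g k ω) ∈ B}.indicator 1 ω ∂μ :=
        (lintegral_finsetSum _ fun ε _ => measurable_one.indicator (hmeas ε hB)).symm
    _ = ∫⁻ ω, #{ε : ι → ℤˣ | (fun k => ε k • g k ω) ∈ B} ∂μ := by
        simp [Set.indicator_apply, sum_boole]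
    _ ≤ ∫⁻ _, K ∂μ := lintegral_mono fun ω => hK _
    _ = K := by simp

lemma measure_sq_sum_gt_le (hg : ∀ k, Measurable (g k)) (hind : iIndepFun g μ)
    (hsym : ∀ k, μ.map (-g k) = μ.map (g k)) {c : ℝ} (hc : 0 < c) :
    μ {ω | c * ∑ k, g k ω ^ 2 < (∑ k, g k ω) ^ 2} ≤ ENNReal.ofReal (2 * exp (-c / 2)) := by
  have hB : MeasurableSet {x : ι → ℝ | c * ∑ k, x k ^ 2 < (∑ k, x k) ^ 2} :=
    measurableSet_lt (by fun_prop) (by fun_prop)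
  have hsq : ∀ (u : ℤˣ) (y : ℝ), (u • y) ^ 2 = y ^ 2 := fun u y => by
    rcases Int.units_eq_one_or u with rfl | rfl <;> simp
  have := card_mul_measure_le_of_card_units_smul_mem_le hg hind hsym hB
    (K := ENNReal.ofReal (2 * 2 ^ Fintype.card ι * exp (-c / 2))) fun x => by
      simp only [Set.mem_ofPred_eq, hsq]
      rw [← ENNReal.ofReal_natCast]
      exact ENNReal.ofReal_le_ofReal (card_sq_sum_units_smul_gt_le x hc)
  rw [show (2 : ℝ) * 2 ^ Fintype.card ι * exp (-c / 2) = 2 ^ Fintype.card ι * (2 * exp (-c / 2))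
    by ring, ENNReal.ofReal_mul (by positivity), ENNReal.ofReal_pow zero_le_two,
    ENNReal.ofReal_ofNat] at this
  exact (ENNReal.mul_le_mul_iff_right (by positivity) (by simp)).1 this

end Symmetrization

lemma map_neg_apply_eq_of_map_eq_map_neg {Ω ι : Type*} [MeasurableSpace Ω] {μ : Measure Ω}
    {F : Ω → ι → ℝ} (hF : Measurable F) (h : μ.map F = μ.map (fun ω i => -F ω i)) (i : ι) :
    μ.map (-fun ω => F ω i) = μ.map (fun ω => F ω i) := by
  have := congrArg (Measure.map fun x : ι → ℝ => x i) h
  rw [Measure.map_map (by fun_prop) hF, Measure.map_map (by fun_prop) (by fun_prop)] at this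
  exact this.symm

lemma one_sub_le_toReal_measure_of_forall_measure_le {Ω ι : Type*} [MeasurableSpace Ω]
    {μ : Measure Ω} [IsProbabilityMeasure μ] [Fintype ι] {E : ι → Set Ω} {G : Set Ω} {δ : ℝ}
    (hδ : 0 ≤ δ) (hE : ∀ i, μ (E i) ≤ ENNReal.ofReal (δ / Fintype.card ι))
    (hG : (⋃ i, E i)ᶜ ⊆ G) :
    1 - δ ≤ (μ G).toReal := by
  have hGc : μ Gᶜ ≤ ENNReal.ofReal δ :=
    calc μ Gᶜ ≤ μ (⋃ i, E i) := measure_mono (Set.compl_subset_comm.1 hG)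
      _ ≤ ∑ i, μ (E i) := measure_iUnion_fintype_le μ E
      _ ≤ ∑ _i : ι, ENNReal.ofReal (δ / Fintype.card ι) := sum_le_sum fun i _ => hE i
      _ ≤ ENNReal.ofReal δ := by
        rw [sum_const, card_univ, nsmul_eq_mul, ← ENNReal.ofReal_natCast,
          ← ENNReal.ofReal_mul (by positivity)]
        gcongr
        rcases eq_or_ne (Fintype.card ι) 0 with h | h
        · simp [h, hδ]
        · rw [mul_div_cancel₀ _ (by exact_mod_cast h)]
  have h1 : 1 ≤ μ G + ENNReal.ofReal δ :=
    calc 1 = μ (G ∪ Gᶜ) := by simp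
      _ ≤ μ G + μ Gᶜ := measure_union_le _ _
      _ ≤ μ G + ENNReal.ofReal δ := by gcongr
  have := ENNReal.toReal_mono (by finiteness) h1
  rw [ENNReal.toReal_add (by finiteness) (by finiteness), ENNReal.toReal_ofReal hδ] at this
  simp only [ENNReal.toReal_one] at this
  linarith

/-- `C k ω i` is `E[X_i Y | D = d_k]` for the `k`-th of the `n` domains drawn by `ω`, and
`m i = E[X_i Y]`. -/
theorem stmt_12_general {Ω : Type*} [MeasurableSpace Ω] (μ : Measure Ω) [IsProbabilityMeasure μ]
    (p : ℕ) (hp : 0 < p) (n : ℕ) (hn : 2 ≤ n)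
    (C : Fin n → Ω → Fin p → ℝ) (m : Fin p → ℝ)
    (hmeas : ∀ k, Measurable (C k))
    (hindep : iIndepFun C μ)
    (hsym : ∀ k, Measure.map (fun ω i => C k ω i - m i) μ
      = Measure.map (fun ω i => -(C k ω i - m i)) μ)
    (μhat : Ω → Fin p → ℝ) (hμ : ∀ ω i, μhat ω i = (1 / (n : ℝ)) * ∑ k, C k ω i)
    (σhat : Ω → Fin p → ℝ)
    (hσ : ∀ ω i, σhat ω i =
      Real.sqrt ((1 / ((n : ℝ) - 1)) * ∑ k, (C k ω i - μhat ω i) ^ 2))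
    (δ : ℝ) (hδ0 : 0 < δ) (hδ1 : δ < 1)
    (hsize : (p : ℝ) ≤ (δ / 2) * Real.exp ((n : ℝ) / 8)) :
    1 - δ ≤ (μ {ω | ∀ i, |μhat ω i - m i| ≤
      (σhat ω i / Real.sqrt n) * Real.sqrt (4 * Real.log (2 * p / δ))}).toReal := by
  have hp' : (1 : ℝ) ≤ p := by exact_mod_cast hp
  have hratio : 1 < 2 * p / δ := by rw [lt_div_iff₀ hδ0]; linarith
  set a := 4 * log (2 * p / δ)
  have ha : 0 < a := by have := log_pos hratio; positivity
  have han : a ≤ n + 1 := by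
    have : log (2 * p / δ) ≤ n / 8 := by
      rw [log_le_iff_le_exp (by positivity), div_le_iff₀ hδ0]; linarith
    linarith
  have htail : 2 * exp (-(a / 2) / 2) = δ / p := by
    rw [show -(a / 2) / 2 = -log (2 * p / δ) by ring, exp_neg, exp_log (by positivity)]
    field_simp
  refine one_sub_le_toReal_measure_of_forall_measure_le
    (E := fun i => {ω | a / 2 * ∑ k, (C k ω i - m i) ^ 2 < (∑ k, (C k ω i - m i)) ^ 2})
    hδ0.le (fun i => ?_) fun ω hω => ?_
  · rw [Fintype.card_fin, ← htail]
    exact measure_sq_sum_gt_le (fun k => by fun_prop)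
      (hindep.comp (fun _ x => x i - m i) fun _ => by fun_prop)
      (fun k => map_neg_apply_eq_of_map_eq_map_neg (by fun_prop) (hsym k) i) (by positivity)
  · simp only [Set.mem_compl_iff, Set.mem_iUnion, Set.mem_ofPred_eq, not_exists, not_lt] at hω ⊢
    intro i
    rw [hσ, hμ]
    exact abs_mean_sub_le_of_sq_sum_le hn (fun k => C k ω i) (m i) ha.le han (hω i)

/-- Theorem 1 of the paper: uniform confidence bound over p features.
`C k ω i` denotes the conditional covariance E[X_i Y | D = d_k] for the k-th training
domain, where the randomness ω is the i.i.d. draw of the n domains; `m i = E[X_i Y]`.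
The centered conditional covariance vector is assumed symmetric. -/
theorem stmt_12 {Ω : Type*} [MeasurableSpace Ω] (μ : Measure Ω) [IsProbabilityMeasure μ]
    (p : ℕ) (hp : 0 < p) (n : ℕ) (hn : 2 ≤ n)
    (C : Fin n → Ω → Fin p → ℝ) (m : Fin p → ℝ)
    (hmeas : ∀ k, Measurable (C k))
    (hindep : iIndepFun C μ)
    (hident : ∀ k l, Measure.map (C k) μ = Measure.map (C l) μ)
    (hsym : ∀ k, Measure.map (fun ω i => C k ω i - m i) μ
      = Measure.map (fun ω i => -(C k ω i - m i)) μ)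
    (μhat : Ω → Fin p → ℝ) (hμ : ∀ ω i, μhat ω i = (1 / (n : ℝ)) * ∑ k, C k ω i)
    (σhat : Ω → Fin p → ℝ)
    (hσ : ∀ ω i, σhat ω i =
      Real.sqrt ((1 / ((n : ℝ) - 1)) * ∑ k, (C k ω i - μhat ω i) ^ 2))
    (δ : ℝ) (hδ0 : 0 < δ) (hδ1 : δ < 1)
    (hsize : (p : ℝ) ≤ (δ / 2) * Real.exp ((n : ℝ) / 8)) :
    1 - δ ≤ (μ {ω | ∀ i, |μhat ω i - m i| ≤
      (σhat ω i / Real.sqrt n) * Real.sqrt (4 * Real.log (2 * p / δ))}).toReal :=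
  stmt_12_general μ p hp n hn C m hmeas hindep hsym μhat hμ σhat hσ δ hδ0 hδ1 hsize
end
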